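/- Let δ ≥ 1 be real, s > 0, t > 0, x ≥ 0 and z > 0. Then ∫₀^∞ p_t(x, y) p_s(y, z) dy = p_{t+s}(x, z), where p_t is the BES(δ) transition density; i.e., the kernels (p_t)_{t>0} satisfy the Chapman–Kolmogorov semigroup equation. -/

import Mathlib

/-!
Write `δ = 2a`. Then `p_t(x, y) = 2 y^{2a-1} (2t)^{-a} e^{-(x²+y²)/2t} J_a((xy/2t)²)` with the
entire series `J_a(w) = Σ wᵐ / (m! Γ(a+m))` (`besselSeries a w` below), so with `c = (t+s)/(2ts)`,
`u = (x/2t)²` and `v = (z/2s)²` the Chapman–Kolmogorov integral is a constant times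
`∫₀^∞ y^{2a-1} e^{-c y²} J_a(u y²) J_a(v y²) dy`. Expanding both series and integrating term by term
against the Gaussian moments `∫₀^∞ y^{2b-1} e^{-c y²} dy = c^{-b} Γ(b)/2` gives `c^{-a}/2` times
`Σ Γ(a+m+n) / (Γ(a+m) Γ(a+n)) Aᵐ Bⁿ / (m! n!)` with `A = u/c`, `B = v/c`, and this double series
sums to `e^{A+B} J_a(AB)` by a Vandermonde identity for rising factorials. What remains is an
identity between the parameters.
-/

open Real MeasureTheory

/-- Imaginary-argument normalized spherical Bessel function `ĵ_ν(z) = j_ν(iz)`. -/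
noncomputable def sphBesselI (ν : ℝ) (z : ℝ) : ℝ :=
  Real.Gamma (ν + 1) *
    ∑' m : ℕ, (z / 2) ^ (2 * m) / (Nat.factorial m * Real.Gamma (ν + m + 1))

/-- Transition density `p_t(x,y)` of the `δ`-dimensional Bessel process BES(δ). -/
noncomputable def besselDensity (δ t x y : ℝ) : ℝ :=
  2 * y ^ (δ - 1) * (2 * t) ^ (-(δ / 2)) / Real.Gamma (δ / 2) *
    sphBesselI (δ / 2 - 1) (x * y / t) * Real.exp (-(x ^ 2 + y ^ 2) / (2 * t))

open Polynomial Finset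
open scoped Nat

theorem ascPochhammer_eval_add_eq_sum_antidiagonal {R : Type*} [CommRing R] (a b : R) (m : ℕ) :
    (ascPochhammer R m).eval (a + b) = ∑ ij ∈ antidiagonal m,
      (m.choose ij.1 : R) * ((descPochhammer R ij.1).eval b *
        (ascPochhammer R ij.2).eval (a + ij.1)) := by
  induction m generalizing a with
  | zero => simp
  | succ m ih =>
    rw [sum_antidiagonal_choose_succ_mul
      (fun i j => (descPochhammer R i).eval b * (ascPochhammer R j).eval (a + i)),
      ascPochhammer_succ_left, eval_mul, eval_X, eval_comp, eval_add, eval_X, eval_one,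
      add_right_comm, ih, mul_sum, ← sum_add_distrib]
    refine sum_congr rfl fun ij hij => ?_
    rw [Nat.choose_symm_of_eq_add (mem_antidiagonal.1 hij).symm, ascPochhammer_succ_left,
      descPochhammer_succ_eval, eval_mul, eval_X, eval_comp, eval_add, eval_X, eval_one]
    push_cast
    rw [add_right_comm a 1, ← add_assoc]
    ring

namespace Real

theorem ascPochhammer_eval_eq_Gamma_div {a : ℝ} (ha : 0 < a) (n : ℕ) :
    (ascPochhammer ℝ n).eval a = Gamma (a + n) / Gamma a := by
  rw [eq_div_iff (Gamma_pos_of_pos ha).ne']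
  induction n with
  | zero => simp
  | succ n ih =>
    rw [ascPochhammer_succ_eval, Nat.cast_succ, ← add_assoc,
      Gamma_add_one (by positivity), mul_right_comm, ih, mul_comm]

theorem Gamma_add_add_div_Gamma_mul_Gamma {a : ℝ} (ha : 0 < a) (m n : ℕ) :
    Gamma (a + m + n) / (Gamma (a + m) * Gamma (a + n)) =
      ∑ k ∈ range (m + 1), m.choose k * n.descFactorial k / Gamma (a + k) := by
  have hΓ (k : ℕ) : Gamma (a + k) ≠ 0 := (Gamma_pos_of_pos (by positivity)).ne'
  have h := ascPochhammer_eval_add_eq_sum_antidiagonal a (n : ℝ) m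
  rw [Nat.sum_antidiagonal_eq_sum_range_succ
    (fun i j => (m.choose i : ℝ) * ((descPochhammer ℝ i).eval (n : ℝ) *
      (ascPochhammer ℝ j).eval (a + i))),
    ascPochhammer_eval_eq_Gamma_div (by positivity), add_right_comm, div_eq_iff (hΓ n)] at h
  rw [div_eq_iff (mul_ne_zero (hΓ m) (hΓ n)), h, sum_mul, sum_mul]
  refine sum_congr rfl fun k hk => ?_
  rw [descPochhammer_eval_eq_descFactorial, ascPochhammer_eval_eq_Gamma_div (by positivity),
    Nat.cast_sub (Nat.lt_succ_iff.mp (mem_range.mp hk)), add_assoc, add_sub_cancel]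
  field_simp [hΓ k]

theorem one_le_Gamma {x : ℝ} (hx : 2 ≤ x) : 1 ≤ Gamma x :=
  Gamma_two ▸ Gamma_strictMonoOn_Ici.monotoneOn Set.self_mem_Ici hx hx

end Real

theorem integral_rpow_two_mul_sub_one_mul_exp_neg_mul_sq {a c : ℝ} (ha : 0 < a) (hc : 0 < c) :
    ∫ y in Set.Ioi 0, y ^ (2 * a - 1) * exp (-c * y ^ 2) = c ^ (-a) / 2 * Gamma a := by
  have h := integral_rpow_mul_exp_neg_mul_rpow two_pos (by linarith : -1 < 2 * a - 1) hc
  simp_rw [rpow_two] at h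
  rw [h, sub_add_cancel, mul_div_cancel_left₀ a two_ne_zero, neg_div,
    mul_div_cancel_left₀ a two_ne_zero]
  ring

noncomputable def besselSeriesTerm (a w : ℝ) (m : ℕ) : ℝ := w ^ m / (m ! * Gamma (a + m))

/-- The regularized hypergeometric series `₀F̃₁(; a; w)`. -/
noncomputable def besselSeries (a w : ℝ) : ℝ := ∑' m, besselSeriesTerm a w m

theorem summable_norm_besselSeriesTerm (a w : ℝ) :
    Summable fun m => ‖besselSeriesTerm a w m‖ := by
  refine .of_norm_bounded_eventually_nat (Real.summable_pow_div_factorial ‖w‖) ?_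
  filter_upwards [Filter.eventually_ge_atTop ⌈2 - a⌉₊] with m hm
  have hΓ : 1 ≤ Gamma (a + m) := one_le_Gamma (by linarith [Nat.ceil_le.mp hm])
  rw [norm_norm, besselSeriesTerm, norm_div, norm_pow, norm_mul, Real.norm_natCast,
    Real.norm_of_nonneg (zero_le_one.trans hΓ)]
  exact div_le_div_of_nonneg_left (by positivity) (by positivity)
    (le_mul_of_one_le_right (by positivity) hΓ)

theorem hasSum_besselSeriesTerm (a w : ℝ) : HasSum (besselSeriesTerm a w) (besselSeries a w) :=
  (summable_norm_besselSeriesTerm a w).of_norm.hasSum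

theorem besselSeriesTerm_mul_right (a u w : ℝ) (m : ℕ) :
    besselSeriesTerm a (u * w) m = besselSeriesTerm a u m * w ^ m := by
  rw [besselSeriesTerm, besselSeriesTerm, mul_pow, mul_div_right_comm]

theorem hasSum_besselSeriesTerm_mul (a u v : ℝ) :
    HasSum (fun p : ℕ × ℕ => besselSeriesTerm a u p.1 * besselSeriesTerm a v p.2)
      (besselSeries a u * besselSeries a v) :=
  HasSum.mul (f := besselSeriesTerm a u) (g := besselSeriesTerm a v)
    (hasSum_besselSeriesTerm a u) (hasSum_besselSeriesTerm a v)
    (summable_mul_of_summable_norm (summable_norm_besselSeriesTerm a u)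
      (summable_norm_besselSeriesTerm a v))

theorem hasSum_besselSeriesTerm_mul_exp_mul_exp (a A B : ℝ) :
    HasSum (fun q : ℕ × ℕ × ℕ =>
      besselSeriesTerm a (A * B) q.1 * (A ^ q.2.1 / q.2.1 ! * (B ^ q.2.2 / q.2.2 !)))
      (besselSeries a (A * B) * (exp A * exp B)) := by
  have hexp (x : ℝ) : HasSum (fun n => x ^ n / n !) (exp x) := by
    simpa [Real.exp_eq_exp_ℝ] using NormedSpace.expSeries_div_hasSum_exp x
  have hnorm (x : ℝ) : Summable fun n => ‖x ^ n / (n ! : ℝ)‖ :=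
    NormedSpace.norm_expSeries_div_summable (𝔸 := ℝ) x
  have hAB_norm : Summable fun q : ℕ × ℕ => ‖A ^ q.1 / (q.1 ! : ℝ) * (B ^ q.2 / q.2 !)‖ :=
    Summable.mul_norm (f := fun n => A ^ n / (n ! : ℝ)) (g := fun n => B ^ n / (n ! : ℝ))
      (hnorm A) (hnorm B)
  exact HasSum.mul (f := besselSeriesTerm a (A * B))
    (g := fun q : ℕ × ℕ => A ^ q.1 / q.1 ! * (B ^ q.2 / q.2 !)) (hasSum_besselSeriesTerm a _)
    (HasSum.mul (f := fun n => A ^ n / (n ! : ℝ)) (g := fun n => B ^ n / (n ! : ℝ))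
      (hexp A) (hexp B) hAB_norm.of_norm)
    (summable_mul_of_summable_norm (summable_norm_besselSeriesTerm _ _) hAB_norm)

/-- Substituting `m = k + p`, `n = k + q` turns the triple product of
`hasSum_besselSeriesTerm_mul_exp_mul_exp` into a family `g` over `((m, n), k)` whose sum over `k`
is, by `Real.Gamma_add_add_div_Gamma_mul_Gamma`, the `(m, n)` term here. -/
theorem hasSum_exp_add_mul_besselSeries {a : ℝ} (ha : 0 < a) (A B : ℝ) :
    HasSum (fun p : ℕ × ℕ => Gamma (a + p.1 + p.2) / (Gamma (a + p.1) * Gamma (a + p.2)) *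
      (A ^ p.1 / p.1 ! * (B ^ p.2 / p.2 !))) (exp (A + B) * besselSeries a (A * B)) := by
  let g : (ℕ × ℕ) × ℕ → ℝ := fun w => w.1.1.choose w.2 * w.1.2.descFactorial w.2 /
    Gamma (a + w.2) * (A ^ w.1.1 / w.1.1 ! * (B ^ w.1.2 / w.1.2 !))
  let i : ℕ × ℕ × ℕ → (ℕ × ℕ) × ℕ := fun q => ((q.1 + q.2.1, q.1 + q.2.2), q.1)
  have hi : Function.Injective i := by
    rintro ⟨k, p, q⟩ ⟨k', p', q'⟩ h
    simp only [i, Prod.mk.injEq] at h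
    ext <;> simp <;> omega
  have hgi : g ∘ i = fun q : ℕ × ℕ × ℕ =>
      besselSeriesTerm a (A * B) q.1 * (A ^ q.2.1 / q.2.1 ! * (B ^ q.2.2 / q.2.2 !)) := by
    ext ⟨k, p, q⟩
    have hq : (q ! : ℝ) * (k + q).descFactorial k = (k + q)! := by
      exact_mod_cast (by simpa using Nat.factorial_mul_descFactorial (Nat.le_add_right k q))
    simp only [Function.comp, g, i, besselSeriesTerm, Nat.cast_add_choose, ← hq]
    field_simp
    ring
  have hg_zero : ∀ w ∉ Set.range i, g w = 0 := by
    rintro ⟨⟨m, n⟩, k⟩ hw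
    by_contra hk
    have hkm : k ≤ m := by
      by_contra h; exact hk (by simp [g, Nat.choose_eq_zero_of_lt (not_le.mp h)])
    have hkn : k ≤ n := by
      by_contra h; exact hk (by simp [g, Nat.descFactorial_eq_zero_iff_lt.mpr (not_le.mp h)])
    exact hw ⟨(k, m - k, n - k), by simp [i, hkm, hkn]⟩
  have hg : HasSum g (besselSeries a (A * B) * (exp A * exp B)) :=
    (hi.hasSum_iff hg_zero).mp (hgi ▸ hasSum_besselSeriesTerm_mul_exp_mul_exp a A B)
  rw [exp_add, mul_comm]
  refine hg.prod_fiberwise fun p => ?_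
  rw [Gamma_add_add_div_Gamma_mul_Gamma ha, sum_mul]
  refine hasSum_sum_of_ne_finset_zero fun k hk => ?_
  simp [g, Nat.choose_eq_zero_of_lt (not_lt.mp (mt mem_range.mpr hk))]

theorem integral_besselSeriesTerm_mul_besselSeriesTerm_mul_rpow_mul_exp {a c : ℝ} (ha : 0 < a)
    (hc : 0 < c) (u v : ℝ) (m n : ℕ) :
    ∫ y in Set.Ioi 0, besselSeriesTerm a u m * besselSeriesTerm a v n *
        (y ^ (2 * (a + m + n) - 1) * exp (-c * y ^ 2)) =
      c ^ (-a) / 2 * (Gamma (a + m + n) / (Gamma (a + m) * Gamma (a + n)) *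
        ((u / c) ^ m / m ! * ((v / c) ^ n / n !))) := by
  rw [integral_const_mul, integral_rpow_two_mul_sub_one_mul_exp_neg_mul_sq (by positivity) hc,
    neg_add, neg_add, rpow_add hc, rpow_add hc]
  simp only [rpow_neg hc.le, rpow_natCast, besselSeriesTerm, div_pow]
  have := (Gamma_pos_of_pos (s := a + m) (by positivity)).ne'
  have := (Gamma_pos_of_pos (s := a + n) (by positivity)).ne'
  field_simp

theorem integral_rpow_mul_exp_neg_mul_sq_mul_besselSeries_mul_besselSeries {a c u v : ℝ}
    (ha : 0 < a) (hc : 0 < c) (hu : 0 ≤ u) (hv : 0 ≤ v) :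
    ∫ y in Set.Ioi 0, y ^ (2 * a - 1) * exp (-c * y ^ 2) *
        (besselSeries a (u * y ^ 2) * besselSeries a (v * y ^ 2)) =
      c ^ (-a) / 2 * (exp ((u + v) / c) * besselSeries a (u * v / c ^ 2)) := by
  let F : ℕ × ℕ → ℝ → ℝ := fun p y => besselSeriesTerm a u p.1 * besselSeriesTerm a v p.2 *
    (y ^ (2 * (a + p.1 + p.2) - 1) * exp (-c * y ^ 2))
  have hF_int (p : ℕ × ℕ) : Integrable (F p) (volume.restrict (Set.Ioi 0)) :=
    (integrableOn_rpow_mul_exp_neg_mul_sq hc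
      (by linarith [(by positivity : 0 < a + p.1 + p.2)])).const_mul _
  have hF_nonneg (p : ℕ × ℕ) (y : ℝ) (hy : 0 < y) : 0 ≤ F p y := by
    have := Gamma_pos_of_pos (s := a + p.1) (by positivity)
    have := Gamma_pos_of_pos (s := a + p.2) (by positivity)
    simp only [F, besselSeriesTerm]
    positivity
  have hF_sum (y : ℝ) (hy : 0 < y) : HasSum (F · y) (y ^ (2 * a - 1) * exp (-c * y ^ 2) *
      (besselSeries a (u * y ^ 2) * besselSeries a (v * y ^ 2))) := by
    refine ((hasSum_besselSeriesTerm_mul a (u * y ^ 2) (v * y ^ 2)).mul_left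
      (y ^ (2 * a - 1) * exp (-c * y ^ 2))).congr_fun fun p => ?_
    have hpow : y ^ (2 * (a + p.1 + p.2) - 1) =
        y ^ (2 * a - 1) * ((y ^ 2) ^ p.1 * (y ^ 2) ^ p.2) := by
      rw [← pow_add, ← pow_mul, ← rpow_natCast, ← rpow_add hy]
      push_cast
      ring_nf
    simp only [F, besselSeriesTerm_mul_right, hpow]
    ring
  have hF_hasSum : HasSum (fun p => ∫ y in Set.Ioi 0, F p y)
      (c ^ (-a) / 2 * (exp (u / c + v / c) * besselSeries a (u / c * (v / c)))) := by
    simp_rw [F, integral_besselSeriesTerm_mul_besselSeriesTerm_mul_rpow_mul_exp ha hc]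
    exact (hasSum_exp_add_mul_besselSeries ha _ _).mul_left _
  have hF_norm : Summable fun p => ∫ y in Set.Ioi 0, ‖F p y‖ :=
    hF_hasSum.summable.congr fun p => setIntegral_congr_fun measurableSet_Ioi fun y hy =>
      (Real.norm_of_nonneg (hF_nonneg p y hy)).symm
  have h := hasSum_integral_of_summable_integral_norm hF_int hF_norm
  rw [setIntegral_congr_fun measurableSet_Ioi fun y hy => (hF_sum y hy).tsum_eq] at h
  rw [h.unique hF_hasSum, add_div, div_mul_div_comm, sq]

theorem sphBesselI_sub_one_eq (a z : ℝ) :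
    sphBesselI (a - 1) z = Gamma a * besselSeries a ((z / 2) ^ 2) := by
  simp only [sphBesselI, besselSeries, besselSeriesTerm, ← pow_mul,
    sub_add_eq_add_sub _ (1 : ℝ), add_sub_cancel_right]

theorem besselDensity_two_mul_eq {a : ℝ} (ha : 0 < a) (t x y : ℝ) :
    besselDensity (2 * a) t x y = 2 * y ^ (2 * a - 1) * (2 * t) ^ (-a) *
      besselSeries a ((x * y / (2 * t)) ^ 2) * exp (-(x ^ 2 + y ^ 2) / (2 * t)) := by
  rw [besselDensity, mul_div_cancel_left₀ a two_ne_zero, sphBesselI_sub_one_eq, div_div,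
    mul_comm t 2]
  field_simp [(Gamma_pos_of_pos ha).ne']

theorem besselDensity_mul_besselDensity {a s t : ℝ} (ha : 0 < a) (hs : s ≠ 0) (ht : t ≠ 0)
    (x y z : ℝ) :
    besselDensity (2 * a) t x y * besselDensity (2 * a) s y z =
      4 * z ^ (2 * a - 1) * ((2 * t) ^ (-a) * (2 * s) ^ (-a)) *
        (exp (-x ^ 2 / (2 * t)) * exp (-z ^ 2 / (2 * s))) *
        (y ^ (2 * a - 1) * exp (-((t + s) / (2 * t * s)) * y ^ 2) *
          (besselSeries a ((x / (2 * t)) ^ 2 * y ^ 2) *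
            besselSeries a ((z / (2 * s)) ^ 2 * y ^ 2))) := by
  have hexp : exp (-(x ^ 2 + y ^ 2) / (2 * t)) * exp (-(y ^ 2 + z ^ 2) / (2 * s)) =
      exp (-x ^ 2 / (2 * t)) * exp (-z ^ 2 / (2 * s)) *
        exp (-((t + s) / (2 * t * s)) * y ^ 2) := by
    simp only [← exp_add]
    congr 1
    field_simp
    ring
  rw [besselDensity_two_mul_eq ha, besselDensity_two_mul_eq ha,
    show (x * y / (2 * t)) ^ 2 = (x / (2 * t)) ^ 2 * y ^ 2 by ring,
    show (y * z / (2 * s)) ^ 2 = (z / (2 * s)) ^ 2 * y ^ 2 by ring]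
  linear_combination 4 * z ^ (2 * a - 1) * ((2 * t) ^ (-a) * (2 * s) ^ (-a)) * y ^ (2 * a - 1) *
    (besselSeries a ((x / (2 * t)) ^ 2 * y ^ 2) * besselSeries a ((z / (2 * s)) ^ 2 * y ^ 2)) *
      hexp

theorem besselDensity_chapman_kolmogorov_general
    (δ : ℝ) (hδ : 1 ≤ δ) (s t x z : ℝ) (hs : 0 < s) (ht : 0 < t) :
    ∫ y in Set.Ioi (0 : ℝ), besselDensity δ t x y * besselDensity δ s y z =
      besselDensity δ (t + s) x z := by
  obtain ⟨a, rfl⟩ : ∃ a, δ = 2 * a := ⟨δ / 2, by ring⟩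
  have ha : 0 < a := by linarith
  have hc : 0 < (t + s) / (2 * t * s) := by positivity
  simp_rw [besselDensity_mul_besselDensity ha hs.ne' ht.ne']
  rw [integral_const_mul, integral_rpow_mul_exp_neg_mul_sq_mul_besselSeries_mul_besselSeries ha hc
    (sq_nonneg _) (sq_nonneg _), besselDensity_two_mul_eq ha]
  have hJ : (x / (2 * t)) ^ 2 * (z / (2 * s)) ^ 2 / ((t + s) / (2 * t * s)) ^ 2 =
      (x * z / (2 * (t + s))) ^ 2 := by
    field_simp
  have hpow : (2 * t) ^ (-a) * (2 * s) ^ (-a) * ((t + s) / (2 * t * s)) ^ (-a) =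
      (2 * (t + s)) ^ (-a) := by
    rw [← mul_rpow (by positivity) (by positivity), ← mul_rpow (by positivity) hc.le]
    congr 1
    field_simp
  have hexp : exp (-x ^ 2 / (2 * t)) * exp (-z ^ 2 / (2 * s)) *
      exp (((x / (2 * t)) ^ 2 + (z / (2 * s)) ^ 2) / ((t + s) / (2 * t * s))) =
        exp (-(x ^ 2 + z ^ 2) / (2 * (t + s))) := by
    simp only [← exp_add]
    congr 1
    field_simp
    ring
  rw [hJ, ← hpow, ← hexp]
  ring

/-- Chapman–Kolmogorov semigroup equation for the BES(δ) transition densities. -/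
theorem besselDensity_chapman_kolmogorov
    (δ : ℝ) (hδ : 1 ≤ δ) (s t x z : ℝ) (hs : 0 < s) (ht : 0 < t)
    (hx : 0 ≤ x) (hz : 0 < z) :
    ∫ y in Set.Ioi (0 : ℝ), besselDensity δ t x y * besselDensity δ s y z =
      besselDensity δ (t + s) x z :=
  besselDensity_chapman_kolmogorov_general δ hδ s t x z hs ht
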